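/- In the ring R = ℚ[x, y, zx, zy] (the subring of ℚ[x,y,z] generated over ℚ by x, y, zx, zy), the elements x² + y² and x² + z²x² are irreducible in R, their product satisfies (x² + y²)(x² + z²x²) = x²·(x² + y² + z²x² + z²y²), and x² is neither a unit nor irreducible in R. -/

import Mathlib

open MvPolynomial in
/-- The subring `ℚ[x, y, zx, zy]` of `ℚ[x, y, z]`, with `x = X 0`, `y = X 1`,
`z = X 2`. -/
noncomputable def ratMonomialSubring : Subalgebra ℚ (MvPolynomial (Fin 3) ℚ) :=
  Algebra.adjoin ℚ {X 0, X 1, X 2 * X 0, X 2 * X 1}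

open MvPolynomial in
/-- The element `x` of `ℚ[x, y, zx, zy]`. -/
noncomputable def xQ : ratMonomialSubring :=
  ⟨X 0, Algebra.subset_adjoin (by simp)⟩

open MvPolynomial in
/-- The element `y` of `ℚ[x, y, zx, zy]`. -/
noncomputable def yQ : ratMonomialSubring :=
  ⟨X 1, Algebra.subset_adjoin (by simp)⟩

open MvPolynomial in
/-- The element `zx` of `ℚ[x, y, zx, zy]`. -/
noncomputable def zxQ : ratMonomialSubring :=
  ⟨X 2 * X 0, Algebra.subset_adjoin (by simp)⟩

open MvPolynomial in
/-- The element `zy` of `ℚ[x, y, zx, zy]`. -/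
noncomputable def zyQ : ratMonomialSubring :=
  ⟨X 2 * X 1, Algebra.subset_adjoin (by simp)⟩

namespace RatMonomialAux

open MvPolynomial

/-- The isomorphism separating out the variable `z = X 2`. -/
noncomputable def Phi : MvPolynomial (Fin 3) ℚ ≃ₐ[ℚ] Polynomial (MvPolynomial (Fin 2) ℚ) :=
  (renameEquiv ℚ (Equiv.swap 0 2)).trans (finSuccEquiv ℚ 2)

lemma Phi_X0 : Phi (X 0) = Polynomial.C (X 1) := by
  simp [Phi, renameEquiv_apply, Equiv.swap_apply_left]
  rw [show ((2:Fin 3)) = (Fin.succ 1) from rfl, finSuccEquiv_X_succ]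

lemma Phi_X1 : Phi (X 1) = Polynomial.C (X 0) := by
  simp [Phi, renameEquiv_apply]
  rw [show ((Equiv.swap (0:Fin 3) 2) 1) = (Fin.succ 0) from rfl, finSuccEquiv_X_succ]

lemma Phi_X2 : Phi (X 2) = Polynomial.X := by
  simp [Phi, renameEquiv_apply, Equiv.swap_apply_right, finSuccEquiv_X_zero]

lemma finSuccEquiv_C' (n : ℕ) (c : ℚ) :
    (finSuccEquiv ℚ n) (C c) = Polynomial.C (C c) := by
  simp [finSuccEquiv_apply]

lemma Phi_C (c : ℚ) : Phi (C c) = Polynomial.C (C c) := by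
  simp [Phi, finSuccEquiv_C' 2 c]

/-- The monomial-support condition cutting out `ℚ[x, y, zx, zy]`. -/
def good (p : MvPolynomial (Fin 3) ℚ) : Prop := ∀ m ∈ p.support, m 2 ≤ m 0 + m 1

noncomputable def goodSub : Subalgebra ℚ (MvPolynomial (Fin 3) ℚ) where
  carrier := {p | good p}
  mul_mem' := by
    intro a b ha hb m hm
    have := MvPolynomial.support_mul a b hm
    rw [Finset.mem_add] at this
    obtain ⟨m1, hm1, m2, hm2, rfl⟩ := this
    have h1 := ha m1 hm1
    have h2 := hb m2 hm2
    simp only [Finsupp.add_apply]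
    omega
  add_mem' := by
    intro a b ha hb m hm
    rcases Finset.mem_union.mp (MvPolynomial.support_add hm) with h | h
    · exact ha m h
    · exact hb m h
  algebraMap_mem' := by
    intro c m hm
    have : (algebraMap ℚ (MvPolynomial (Fin 3) ℚ)) c = C c := rfl
    rw [this] at hm
    rw [C_apply] at hm
    have h := support_monomial_subset hm
    simp only [Finset.mem_singleton] at h
    subst h; simp

lemma good_X (i : Fin 3)
    (h : (Finsupp.single i 1) 2 ≤ (Finsupp.single i 1) 0 + (Finsupp.single i 1) 1) :
    good (X i : MvPolynomial (Fin 3) ℚ) := by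
  intro m hm
  rw [support_X, Finset.mem_singleton] at hm
  subst hm; exact h

lemma good_XX (i j : Fin 3)
    (h : ((Finsupp.single i 1 + Finsupp.single j 1) : Fin 3 →₀ ℕ) 2 ≤
      ((Finsupp.single i 1 + Finsupp.single j 1) : Fin 3 →₀ ℕ) 0 +
      ((Finsupp.single i 1 + Finsupp.single j 1) : Fin 3 →₀ ℕ) 1) :
    good (X i * X j : MvPolynomial (Fin 3) ℚ) := by
  intro m hm
  rw [X, X, monomial_mul, support_monomial] at hm
  simp only [one_mul, if_neg (one_ne_zero), Finset.mem_singleton] at hm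
  subst hm; exact h

lemma mem_good {p : MvPolynomial (Fin 3) ℚ} (hp : p ∈ ratMonomialSubring) : good p := by
  have : ratMonomialSubring ≤ goodSub := by
    apply Algebra.adjoin_le
    rintro g hg
    simp only [Set.mem_insert_iff, Set.mem_singleton_iff] at hg
    rcases hg with rfl | rfl | rfl | rfl
    · exact good_X 0 (by simp [Finsupp.single_apply])
    · exact good_X 1 (by simp [Finsupp.single_apply])
    · exact good_XX 2 0 (by simp [Finsupp.single_apply])
    · exact good_XX 2 1 (by simp [Finsupp.single_apply])
  exact this hp

lemma eq_C_of_isUnit : ∀ {n : ℕ} (a : MvPolynomial (Fin n) ℚ), IsUnit a →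
    ∃ c : ℚ, c ≠ 0 ∧ a = C c := by
  intro n
  induction n with
  | zero =>
    intro a ha
    obtain ⟨c, rfl⟩ := C_surjective (Fin 0) a
    refine ⟨c, ?_, rfl⟩
    rintro rfl
    simp only [map_zero] at ha
    exact ha.ne_zero rfl
  | succ n ih =>
    intro a ha
    have h2 : IsUnit (finSuccEquiv ℚ n a) := ha.map _
    obtain ⟨r, hr, hCr⟩ := Polynomial.isUnit_iff.mp h2
    obtain ⟨c, hc, rfl⟩ := ih r hr
    refine ⟨c, hc, ?_⟩
    apply (finSuccEquiv ℚ n).injective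
    rw [← hCr, finSuccEquiv_C' n c]

lemma prime_X1 : Prime (X 1 : MvPolynomial (Fin 2) ℚ) := by
  let e : MvPolynomial (Fin 2) ℚ ≃* Polynomial (MvPolynomial (Fin 1) ℚ) :=
    ((renameEquiv ℚ (Equiv.swap (0:Fin 2) 1)).trans (finSuccEquiv ℚ 1)).toRingEquiv.toMulEquiv
  rw [← MulEquiv.prime_iff e]
  have : e (X 1) = Polynomial.X := by
    show ((renameEquiv ℚ (Equiv.swap (0:Fin 2) 1)).trans (finSuccEquiv ℚ 1)) (X 1) = Polynomial.X
    simp [renameEquiv_apply, Equiv.swap_apply_right, finSuccEquiv_X_zero]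
  rw [this]
  exact Polynomial.prime_X

lemma poly_split {A : Type*} [CommRing A] [IsDomain A] (a b : A) (ha : a ≠ 0) (hb : b ≠ 0)
    (hsq : ∀ r : A, r * r ≠ -(a * b)) (P Q : Polynomial A)
    (h : P * Q = Polynomial.C b * Polynomial.X ^ 2 + Polynomial.C 0 * Polynomial.X
      + Polynomial.C a) :
    P.natDegree = 0 ∨ Q.natDegree = 0 := by
  have hd2 : (Polynomial.C b * Polynomial.X ^ 2 + Polynomial.C 0 * Polynomial.X
      + Polynomial.C a).natDegree = 2 :=
    Polynomial.natDegree_quadratic hb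
  have hne : P * Q ≠ 0 := by
    rw [h]
    intro h0
    rw [h0] at hd2
    simp at hd2
  have hP : P ≠ 0 := fun h0 => hne (by rw [h0, zero_mul])
  have hQ : Q ≠ 0 := fun h0 => hne (by rw [h0, mul_zero])
  have hsum : P.natDegree + Q.natDegree = 2 := by
    rw [← Polynomial.natDegree_mul hP hQ, h, hd2]
  by_contra hcon
  push_neg at hcon
  have hP1 : P.natDegree = 1 := by omega
  have hQ1 : Q.natDegree = 1 := by omega
  have hPe := Polynomial.eq_X_add_C_of_natDegree_le_one (hP1.le)
  have hQe := Polynomial.eq_X_add_C_of_natDegree_le_one (hQ1.le)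
  set p1 := P.coeff 1; set p0 := P.coeff 0; set q1 := Q.coeff 1; set q0 := Q.coeff 0
  rw [hPe, hQe] at h
  have h' : Polynomial.C (p1*q1) * Polynomial.X^2 + Polynomial.C (p1*q0+p0*q1) * Polynomial.X
      + Polynomial.C (p0*q0)
      = Polynomial.C b * Polynomial.X ^ 2 + Polynomial.C 0 * Polynomial.X + Polynomial.C a := by
    rw [← h]; simp only [map_mul, map_add]; ring
  have coeffs : ∀ k : ℕ, p1*q1 * (Polynomial.X^2:Polynomial A).coeff k
      + (p1*q0+p0*q1) * (Polynomial.X:Polynomial A).coeff k + (if k = 0 then p0*q0 else 0)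
      = b * (Polynomial.X^2:Polynomial A).coeff k + 0 * (Polynomial.X:Polynomial A).coeff k
      + (if k = 0 then a else 0) := by
    intro k
    have := congrArg (fun f => Polynomial.coeff f k) h'
    simpa only [Polynomial.coeff_add, Polynomial.coeff_C_mul, Polynomial.coeff_C] using this
  have c0 : p0 * q0 = a := by
    have := coeffs 0; norm_num [Polynomial.coeff_X, Polynomial.coeff_X_pow] at this; exact this
  have c2 : p1 * q1 = b := by
    have := coeffs 2; norm_num [Polynomial.coeff_X, Polynomial.coeff_X_pow] at this; exact this
  have c1 : p1 * q0 + p0 * q1 = 0 := by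
    have := coeffs 1; norm_num [Polynomial.coeff_X, Polynomial.coeff_X_pow] at this; exact this
  exact hsq (p1*q0) (by linear_combination (p1 * q0) * c1 - b * c0 - p0 * q0 * c2)

lemma case_const (p q : MvPolynomial (Fin 3) ℚ) (hq : good q)
    (h : p * q = X 0 ^ 2 + (X 2 * X 0) ^ 2) (a : MvPolynomial (Fin 2) ℚ)
    (hPa : Phi p = Polynomial.C a) : ∃ c : ℚ, c ≠ 0 ∧ p = C c := by
  have hΦ : Polynomial.C a * Phi q
      = Polynomial.C ((X 1 : MvPolynomial (Fin 2) ℚ)^2) * (1 + Polynomial.X^2) := by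
    rw [← hPa, ← map_mul, h]
    rw [map_add, map_pow, map_pow, map_mul, Phi_X0, Phi_X2, Polynomial.C_pow]
    ring
  have hX1 : (X 1 : MvPolynomial (Fin 2) ℚ) ^ 2 ≠ 0 := pow_ne_zero _ (X_ne_zero 1)
  have hrhs : (Polynomial.C ((X 1 : MvPolynomial (Fin 2) ℚ)^2) * (1 + Polynomial.X^2)) ≠ 0 := by
    apply mul_ne_zero
    · simpa using hX1
    · intro h0
      have := congrArg (fun f => Polynomial.coeff f 0) h0
      simp at this
  have ha0 : a ≠ 0 := by
    rintro rfl
    rw [map_zero, zero_mul] at hΦ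
    exact hrhs hΦ.symm
  have hdvd : a ∣ (X 1 : MvPolynomial (Fin 2) ℚ)^2 := by
    refine ⟨(Phi q).coeff 0, ?_⟩
    have h0 := congrArg (fun f => Polynomial.coeff f 0) hΦ
    simp only [Polynomial.coeff_C_mul, Polynomial.coeff_add, Polynomial.coeff_one,
      Polynomial.coeff_X_pow] at h0
    norm_num at h0
    exact h0.symm
  obtain ⟨i, hi2, u, hu⟩ := (dvd_prime_pow prime_X1 2).mp hdvd
  obtain ⟨c, hc, hcu⟩ := eq_C_of_isUnit (u : MvPolynomial (Fin 2) ℚ) u.isUnit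
  rw [hcu] at hu
  have hCane : (Polynomial.C a : Polynomial (MvPolynomial (Fin 2) ℚ)) ≠ 0 := by simpa using ha0
  interval_cases i
  · -- `a` is a unit
    rw [pow_zero] at hu
    obtain ⟨c', hc', hac⟩ := eq_C_of_isUnit a (IsUnit.of_mul_eq_one _ hu)
    exact ⟨c', hc', Phi.injective (by rw [hPa, hac, Phi_C])⟩
  · -- `a = unit * x` : `q` would contain the monomial `x z²`
    exfalso
    rw [pow_one] at hu
    have hq' : Phi q = Polynomial.C (C c * X 1) * (1 + Polynomial.X^2) := by
      apply mul_left_cancel₀ hCane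
      rw [hΦ, ← mul_assoc, ← Polynomial.C_mul, ← mul_assoc, hu, ← pow_two]
    have himg : Phi (C c * (X 0 + X 0 * X 2 ^ 2))
        = Polynomial.C (C c * X 1) * (1 + Polynomial.X^2) := by
      rw [map_mul, map_add, map_mul, map_pow, Phi_C, Phi_X0, Phi_X2, Polynomial.C_mul]
      ring
    have hqe : q = C c * (X 0 + X 0 * X 2 ^ 2) := Phi.injective (hq'.trans himg.symm)
    set m0 : Fin 3 →₀ ℕ := Finsupp.single 0 1 + Finsupp.single 2 2 with hm0def
    have hmono : (X 0 * X 2 ^ 2 : MvPolynomial (Fin 3) ℚ) = monomial m0 1 := by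
      rw [X_pow_eq_monomial, X, monomial_mul, mul_one]
    have hcoeff : coeff m0 q = c := by
      rw [hqe, coeff_C_mul, coeff_add, hmono, coeff_monomial, if_pos rfl]
      rw [coeff_X']
      have : ¬ (Finsupp.single (0:Fin 3) 1 = m0) := by
        intro hcon
        have := congrArg (fun f => f 2) hcon
        simp [hm0def, Finsupp.single_apply] at this
      rw [if_neg this]; ring
    have hm0 : m0 ∈ q.support := by
      rw [mem_support_iff, hcoeff]; exact hc
    have := hq m0 hm0
    simp [hm0def, Finsupp.single_apply] at this
  · -- `a = unit * x²` : `q` would contain the monomial `z²`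
    exfalso
    have hq' : Phi q = Polynomial.C (C c) * (1 + Polynomial.X^2) := by
      apply mul_left_cancel₀ hCane
      rw [hΦ, ← mul_assoc, ← Polynomial.C_mul, hu]
    have himg : Phi (C c * (1 + X 2 ^ 2)) = Polynomial.C (C c) * (1 + Polynomial.X^2) := by
      rw [map_mul, map_add, map_one, map_pow, Phi_C, Phi_X2]
    have hqe : q = C c * (1 + X 2 ^ 2) := Phi.injective (hq'.trans himg.symm)
    set m0 : Fin 3 →₀ ℕ := Finsupp.single 2 2 with hm0def
    have hcoeff : coeff m0 q = c := by
      rw [hqe, coeff_C_mul, coeff_add, X_pow_eq_monomial, coeff_monomial, if_pos rfl]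
      have h1 : coeff m0 (1 : MvPolynomial (Fin 3) ℚ) = 0 := by
        rw [coeff_one]
        have : ¬ ((0 : Fin 3 →₀ ℕ) = m0) := by
          intro hcon
          have := congrArg (fun f => f 2) hcon
          simp [hm0def, Finsupp.single_apply] at this
        rw [if_neg this]
      rw [h1]; ring
    have hm0 : m0 ∈ q.support := by
      rw [mem_support_iff, hcoeff]; exact hc
    have := hq m0 hm0
    simp [hm0def, Finsupp.single_apply] at this

lemma case_xy (p q : MvPolynomial (Fin 3) ℚ) (h : p * q = X 0 ^ 2 + X 1 ^ 2) :
    (∃ c : ℚ, c ≠ 0 ∧ p = C c) ∨ (∃ c : ℚ, c ≠ 0 ∧ q = C c) := by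
  set d : MvPolynomial (Fin 2) ℚ := X 1 ^ 2 + X 0 ^ 2 with hd
  have hΦ : Phi p * Phi q = Polynomial.C d := by
    rw [← map_mul, h, map_add, map_pow, map_pow, Phi_X0, Phi_X1, map_add,
      Polynomial.C_pow, Polynomial.C_pow]
  have hdne : d ≠ 0 := by
    intro h0
    have := congrArg (eval (fun _ => (1:ℚ))) h0
    simp [hd] at this
  have hCd : (Polynomial.C d : Polynomial (MvPolynomial (Fin 2) ℚ)) ≠ 0 := by simpa using hdne
  have hPne : Phi p ≠ 0 := fun h0 => hCd (by rw [← hΦ, h0, zero_mul])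
  have hQne : Phi q ≠ 0 := fun h0 => hCd (by rw [← hΦ, h0, mul_zero])
  have hdeg : (Phi p).natDegree = 0 ∧ (Phi q).natDegree = 0 := by
    have := Polynomial.natDegree_mul hPne hQne
    rw [hΦ, Polynomial.natDegree_C] at this
    omega
  obtain ⟨a, hA⟩ := Polynomial.natDegree_eq_zero.mp hdeg.1
  obtain ⟨b, hB⟩ := Polynomial.natDegree_eq_zero.mp hdeg.2
  have hab : a * b = d := by
    have : Polynomial.C (a * b) = Polynomial.C d := by
      rw [Polynomial.C_mul, hA, hB, hΦ]
    exact Polynomial.C_injective this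
  set Ψ := finSuccEquiv ℚ 1 with hΨ
  have hΨd : Ψ a * Ψ b = Polynomial.C (1:MvPolynomial (Fin 1) ℚ) * Polynomial.X ^ 2
      + Polynomial.C 0 * Polynomial.X + Polynomial.C ((X 0 : MvPolynomial (Fin 1) ℚ)^2) := by
    rw [← map_mul, hab, hd, map_add, map_pow, map_pow, finSuccEquiv_X_zero]
    rw [show ((1:Fin 2)) = (Fin.succ 0) from rfl, finSuccEquiv_X_succ, Polynomial.C_pow,
      Polynomial.C_1, Polynomial.C_0]
    ring
  have hsplit := poly_split ((X 0 : MvPolynomial (Fin 1) ℚ)^2) 1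
    (pow_ne_zero _ (X_ne_zero 0)) one_ne_zero ?hsq (Ψ a) (Ψ b) hΨd
  case hsq =>
    intro r hr
    have := congrArg (eval (fun _ => (1:ℚ))) hr
    simp at this
    nlinarith [this]
  have key : ∀ s t : MvPolynomial (Fin 2) ℚ, s * t = d → (Ψ s).natDegree = 0 →
      ∃ c : ℚ, c ≠ 0 ∧ s = C c := by
    intro s t hst hdeg0
    obtain ⟨a₀, hA0⟩ := Polynomial.natDegree_eq_zero.mp hdeg0
    have hst' : Polynomial.C a₀ * Ψ t = Ψ d := by rw [hA0, ← map_mul, hst]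
    have hcoeff : a₀ * (Ψ t).coeff 2 = 1 := by
      have h2 := congrArg (fun f => Polynomial.coeff f 2) hst'
      have hΨd2 : (Ψ d).coeff 2 = 1 := by
        rw [hd, map_add, map_pow, map_pow, finSuccEquiv_X_zero]
        rw [show ((1:Fin 2)) = (Fin.succ 0) from rfl, finSuccEquiv_X_succ]
        simp only [← Polynomial.C_pow, Polynomial.coeff_add, Polynomial.coeff_C,
          Polynomial.coeff_X_pow]
        norm_num
      simpa [Polynomial.coeff_C_mul, hΨd2] using h2
    obtain ⟨c, hc, hac⟩ := eq_C_of_isUnit a₀ (IsUnit.of_mul_eq_one _ hcoeff)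
    refine ⟨c, hc, ?_⟩
    apply Ψ.injective
    rw [hA0.symm, hac, hΨ, finSuccEquiv_C']
  rcases hsplit with h1 | h2
  · obtain ⟨c, hc, hsc⟩ := key _ _ hab h1
    refine Or.inl ⟨c, hc, ?_⟩
    apply Phi.injective
    rw [hA.symm, hsc, Phi_C]
  · obtain ⟨c, hc, hsc⟩ := key b a (by rw [mul_comm]; exact hab) h2
    refine Or.inr ⟨c, hc, ?_⟩
    apply Phi.injective
    rw [hB.symm, hsc, Phi_C]

lemma not_unit_of_eval0 (p : ratMonomialSubring)
    (h : eval (fun _ => (0:ℚ)) (p : MvPolynomial (Fin 3) ℚ) = 0) : ¬ IsUnit p := by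
  intro hu
  have h1 : IsUnit (p : MvPolynomial (Fin 3) ℚ) := hu.map ratMonomialSubring.val
  have h2 : IsUnit (eval (fun _ => (0:ℚ)) (p : MvPolynomial (Fin 3) ℚ)) :=
    h1.map (eval (fun _ => (0:ℚ)))
  rw [h] at h2
  exact h2.ne_zero rfl

lemma unit_of_C (c : ℚ) (hc : c ≠ 0) (p : ratMonomialSubring)
    (hp : (p : MvPolynomial (Fin 3) ℚ) = C c) : IsUnit p := by
  have hmem : (C c⁻¹ : MvPolynomial (Fin 3) ℚ) ∈ ratMonomialSubring := by
    rw [← MvPolynomial.algebraMap_eq]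
    exact Subalgebra.algebraMap_mem _ _
  refine IsUnit.of_mul_eq_one (a := p) ⟨C c⁻¹, hmem⟩ ?_
  apply Subtype.ext
  show (p : MvPolynomial (Fin 3) ℚ) * C c⁻¹ = 1
  rw [hp, ← C_mul, mul_inv_cancel₀ hc, C_1]

end RatMonomialAux

open MvPolynomial RatMonomialAux in
/-- In `R = ℚ[x, y, zx, zy]`, the elements `x² + y²` and
`x² + z²x²` are irreducible, their product equals
`x² · (x² + y² + z²x² + z²y²)`, and `x²` is neither a unit nor irreducible. -/
theorem ratMonomialSubring_factorization :
    Irreducible (xQ ^ 2 + yQ ^ 2) ∧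
    Irreducible (xQ ^ 2 + zxQ ^ 2) ∧
    (xQ ^ 2 + yQ ^ 2) * (xQ ^ 2 + zxQ ^ 2) =
      xQ ^ 2 * (xQ ^ 2 + yQ ^ 2 + zxQ ^ 2 + zyQ ^ 2) ∧
    ¬IsUnit (xQ ^ 2) ∧ ¬Irreducible (xQ ^ 2) := by
  have hxy_val : ((xQ ^ 2 + yQ ^ 2 : ratMonomialSubring) : MvPolynomial (Fin 3) ℚ)
      = X 0 ^ 2 + X 1 ^ 2 := rfl
  have hxz_val : ((xQ ^ 2 + zxQ ^ 2 : ratMonomialSubring) : MvPolynomial (Fin 3) ℚ)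
      = X 0 ^ 2 + (X 2 * X 0) ^ 2 := rfl
  have hx2_val : ((xQ ^ 2 : ratMonomialSubring) : MvPolynomial (Fin 3) ℚ) = X 0 ^ 2 := rfl
  have hxunit : ¬ IsUnit xQ := by
    apply not_unit_of_eval0
    show eval (fun _ => (0:ℚ)) (X 0) = 0
    simp
  refine ⟨⟨?_, ?_⟩, ⟨?_, ?_⟩, ?_, ?_, ?_⟩
  · apply not_unit_of_eval0
    rw [hxy_val]; simp
  · intro u v huv
    have hval : (u : MvPolynomial (Fin 3) ℚ) * (v : MvPolynomial (Fin 3) ℚ) = X 0 ^ 2 + X 1 ^ 2 := by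
      have := congrArg Subtype.val huv
      rw [hxy_val] at this
      exact this.symm
    rcases case_xy u v hval with ⟨c, hc, hu⟩ | ⟨c, hc, hv⟩
    · exact Or.inl (unit_of_C c hc u hu)
    · exact Or.inr (unit_of_C c hc v hv)
  · apply not_unit_of_eval0
    rw [hxz_val]; simp
  · intro u v huv
    have hval : (u : MvPolynomial (Fin 3) ℚ) * (v : MvPolynomial (Fin 3) ℚ) = X 0 ^ 2 + (X 2 * X 0) ^ 2 := by
      have := congrArg Subtype.val huv
      rw [hxz_val] at this
      exact this.symm
    have hps : Phi (u : MvPolynomial (Fin 3) ℚ) * Phi (v : MvPolynomial (Fin 3) ℚ)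
        = Polynomial.C ((X 1 : MvPolynomial (Fin 2) ℚ)^2) * Polynomial.X ^ 2
        + Polynomial.C 0 * Polynomial.X + Polynomial.C ((X 1 : MvPolynomial (Fin 2) ℚ)^2) := by
      rw [← map_mul, hval, map_add, map_pow, map_pow, map_mul, Phi_X0, Phi_X2,
        Polynomial.C_pow, Polynomial.C_0]
      ring
    have hX1 : (X 1 : MvPolynomial (Fin 2) ℚ) ^ 2 ≠ 0 := pow_ne_zero _ (X_ne_zero 1)
    have hsplit := poly_split _ _ hX1 hX1 ?hsq _ _ hps
    case hsq =>
      intro r hr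
      have := congrArg (eval (fun _ => (1:ℚ))) hr
      simp at this
      nlinarith [this]
    rcases hsplit with h1 | h2
    · obtain ⟨a, hA⟩ := Polynomial.natDegree_eq_zero.mp h1
      obtain ⟨c, hc, hpc⟩ := case_const (u : MvPolynomial (Fin 3) ℚ) (v : MvPolynomial (Fin 3) ℚ)
        (mem_good v.2) hval a hA.symm
      exact Or.inl (unit_of_C c hc u hpc)
    · obtain ⟨a, hA⟩ := Polynomial.natDegree_eq_zero.mp h2
      obtain ⟨c, hc, hpc⟩ := case_const (v : MvPolynomial (Fin 3) ℚ) (u : MvPolynomial (Fin 3) ℚ)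
        (mem_good u.2) (by rw [mul_comm]; exact hval) a hA.symm
      exact Or.inr (unit_of_C c hc v hpc)
  · apply Subtype.ext
    show ((X 0 : MvPolynomial (Fin 3) ℚ)^2 + X 1 ^2) * (X 0 ^2 + (X 2 * X 0)^2)
      = X 0 ^2 * (X 0 ^2 + X 1 ^2 + (X 2 * X 0)^2 + (X 2 * X 1)^2)
    ring
  · apply not_unit_of_eval0
    rw [hx2_val]; simp
  · intro h
    rcases h.isUnit_or_isUnit (pow_two xQ) with h1 | h1
    · exact hxunit h1
    · exact hxunit h1
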